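/- Completeness of the stream-to-stream representation: given a function rep : (A^ω →c B) → T_A B that is a right inverse to fst ∘ eat on continuous functions, the corecursively defined rep∞ : (A^ω →c B^ω) → P_A B satisfies eat∞ (rep∞ f) α = f α for every continuous f : A^ω → B^ω and every α : A^ω. -/

import Mathlib

universe u

/-- The initial algebra `T_A B = μX. B + X^A`: wellfounded trees branching over `A`
with leaves labelled in `B`. -/
inductive T (A : Type u) (B : Type u) : Type u
  | Ret : B → T A B
  | Rd : (A → T A B) → T A B

namespace StreamProc

/-- `eat (Ret b) α = (b, α)`, `eat (Rd φ) (a ∷ α) = eat (φ a) α`. -/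
def eat {A B : Type u} : T A B → Stream' A → B × Stream' A
  | .Ret b, α => (b, α)
  | .Rd φ, α => eat (φ α.head) α.tail

/-- `β` and `α` agree on their first `n` entries. -/
def Agree {A : Type u} (n : ℕ) (α β : Stream' A) : Prop :=
  ∀ i < n, α.get i = β.get i

/-- continuity of a discrete-valued function on streams (product topology of
the discrete topology, expressed concretely via prefixes). -/
def ContD {A B : Type u} (f : Stream' A → B) : Prop :=
  ∀ α, ∃ n, ∀ β, Agree n α β → f β = f α

/-- continuity of a stream-valued function on streams. -/
def ContS {A B : Type u} (f : Stream' A → Stream' B) : Prop :=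
  ∀ α n, ∃ m, ∀ β, Agree m α β → Agree n (f α) (f β)

/-- structural recursion (fold) on `T A B`. -/
def tfold {A B C : Type u} (r : B → C) (g : (A → C) → C) : T A B → C
  | .Ret b => r b
  | .Rd φ => g fun a => tfold r g (φ a)

/-- bind of the free (tree) monad `T_A`: grafting at leaves. -/
def tbind {A B C : Type u} : T A B → (B → T A C) → T A C
  | .Ret b, f => f b
  | .Rd φ, f => .Rd fun a => tbind (φ a) f

/-- bind of the state monad `M_A B = A^ω → B × A^ω`. -/
def mbind {A B C : Type u} (m : Stream' A → B × Stream' A)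
    (f : B → Stream' A → C × Stream' A) : Stream' A → C × Stream' A :=
  fun α => f (m α).1 (m α).2

/-- the type of leaf positions of a tree. -/
def LeafPos {A B : Type u} : T A B → Type u
  | .Ret _ => PUnit
  | .Rd φ => Σ a, LeafPos (φ a)

/-- the polynomial functor whose extension is `X ↦ T A (B × X)`. -/
def PF (A B : Type u) : PFunctor.{u} := ⟨T A B, LeafPos⟩

/-- `P_A B = νX. T_A (B × X)`, realised as an M-type. -/
def P (A B : Type u) : Type u := (PF A B).M

/-- repack a shape and leaf-labelling as a tree with decorated leaves. -/
def decorate {A B X : Type u} : (t : T A B) → (LeafPos t → X) → T A (B × X)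
  | .Ret b, f => .Ret (b, f PUnit.unit)
  | .Rd φ, f => .Rd fun a => decorate (φ a) fun l => f ⟨a, l⟩

/-- split a leaf-decorated tree into a shape and a leaf-labelling. -/
def splitT {A B X : Type u} : T A (B × X) → Σ t : T A B, LeafPos t → X
  | .Ret bx => ⟨.Ret bx.1, fun _ => bx.2⟩
  | .Rd φ => ⟨.Rd fun a => (splitT (φ a)).1, fun l => (splitT (φ l.1)).2 l.2⟩

/-- the structure map `out : P_A B → T_A (B × P_A B)` of the final coalgebra. -/
def Pout {A B : Type u} (p : P A B) : T A (B × P A B) :=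
  decorate (PFunctor.M.dest p).1 (PFunctor.M.dest p).2

/-- corecursion (unfold) into the final coalgebra `P_A B`. -/
def Punfold {A B X : Type u} (c : X → T A (B × X)) : X → P A B :=
  PFunctor.M.corec fun x => splitT (c x)

/-- `eat∞ : P_A B → A^ω → B^ω`: if `eat (out p) α = ((b, p'), α')` then
`eat∞ p α = b ∷ eat∞ p' α'`. -/
def eatInf {A B : Type u} (p : P A B) (α : Stream' A) : Stream' B :=
  Stream'.corec (fun s : P A B × Stream' A => (eat (Pout s.1) s.2).1.1)
    (fun s => ((eat (Pout s.1) s.2).1.2, (eat (Pout s.1) s.2).2)) (p, α)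

/-- the `fast-forward` map `ρ`. -/
def rho {A B C : Type u} : T A B → (Stream' A → C) → T A (B × (Stream' A → C))
  | .Ret b, f => .Ret (b, f)
  | .Rd φ, f => .Rd fun a => rho (φ a) fun α => f (Stream'.cons a α)

/-- `rep∞ = unfold (ρ ∘ τ)` where `τ f = (rep (head ∘ f), tail ∘ f)`. -/
def repInf {A B : Type u} (rep : (Stream' A → B) → T A B) :
    (Stream' A → Stream' B) → P A B :=
  Punfold fun f => rho (rep fun α => (f α).head) fun α => (f α).tail

/-- the carrier of the composition coalgebras. -/
def S' (A B C : Type u) : Type u := T B (C × P B C) × T A (B × P A B)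

/-- the `lazy' composition coalgebra `χ`, as a nested structural recursion
(outer fold on the postponent, inner fold on the preponent). -/
def chi {A B C : Type u} : T B (C × P B C) → T A (B × P A B) → T A (C × S' A B C) :=
  tfold
    (fun cp u => .Ret (cp.1, (Pout cp.2, u)))
    (fun f => tfold (fun bq => f bq.1 (Pout bq.2)) .Rd)

/-- the `greedy' composition coalgebra `χ'`. -/
def chi' {A B C : Type u} : T B (C × P B C) → T A (B × P A B) → T A (C × S' A B C) :=
  tfold
    (fun cp => tfold (fun bq => .Ret (cp.1, (Pout cp.2, .Ret bq))) .Rd)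
    (fun f => tfold (fun bq => f bq.1 (Pout bq.2)) .Rd)

/-- lazy composition on representatives (tree level). -/
def otimesT {A B C : Type u} (t : T B (C × P B C)) (u : T A (B × P A B)) : P A C :=
  Punfold (fun s : S' A B C => chi s.1 s.2) (t, u)

/-- lazy composition `⊗ : P_B C × P_A B → P_A C`. -/
def otimes {A B C : Type u} (p : P B C) (q : P A B) : P A C :=
  otimesT (Pout p) (Pout q)

/-- greedy composition on representatives (tree level). -/
def otimesT' {A B C : Type u} (t : T B (C × P B C)) (u : T A (B × P A B)) : P A C :=
  Punfold (fun s : S' A B C => chi' s.1 s.2) (t, u)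

/-- greedy composition `⊗' : P_B C × P_A B → P_A C`. -/
def otimes' {A B C : Type u} (p : P B C) (q : P A B) : P A C :=
  otimesT' (Pout p) (Pout q)

end StreamProc

/-!
`rep∞ f` is unfolded from the state `f`: its first layer is `rep (head ∘ f)`, which reads a
finite prefix of `α` and emits `(f α).head` by the hypothesis on `rep`; the fast-forward map `ρ`
then hands over the continuation `tail ∘ f ∘ (prefix ++ ·)`, still continuous, which on the
unread rest of `α` is `(f α).tail`. Hence the relation "`s = eat∞ (rep∞ f) α` and `s' = f α`
for some continuous `f`" is a stream bisimulation.
-/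

namespace StreamProc

open Stream'

section Trees

variable {A B C X Y : Type u}

def tmap (h : B → C) : T A B → T A C
  | .Ret b => .Ret (h b)
  | .Rd φ => .Rd fun a => tmap h (φ a)

lemma eat_tmap (h : B → C) (t : T A B) (α : Stream' A) :
    eat (tmap h t) α = (h (eat t α).1, (eat t α).2) := by
  induction t generalizing α with
  | Ret b => rfl
  | Rd φ ih => exact ih _ _

lemma decorate_splitT (s : T A (B × X)) (h : X → Y) :
    decorate (splitT s).1 (fun l => h ((splitT s).2 l)) = tmap (Prod.map id h) s := by
  induction s with
  | Ret bx => rfl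
  | Rd φ ih => exact congrArg T.Rd (funext ih)

lemma Pout_Punfold (c : X → T A (B × X)) (x : X) :
    Pout (Punfold c x) = tmap (Prod.map id (Punfold c)) (c x) := by
  rw [Pout, Punfold]
  erw [PFunctor.M.dest_corec]
  exact decorate_splitT (c x) (Punfold c)

lemma eatInf_eq_cons (p : P A B) (α : Stream' A) :
    eatInf p α = (eat (Pout p) α).1.1 :: eatInf (eat (Pout p) α).1.2 (eat (Pout p) α).2 := by
  rw [eatInf, corec_eq]
  rfl

end Trees

section FastForward

variable {A B C : Type u}

lemma fst_fst_eat_rho (t : T A B) (g : Stream' A → C) (α : Stream' A) :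
    (eat (rho t g) α).1.1 = (eat t α).1 := by
  induction t generalizing g α with
  | Ret b => rfl
  | Rd φ ih => exact ih _ _ _

lemma snd_eat_rho (t : T A B) (g : Stream' A → C) (α : Stream' A) :
    (eat (rho t g) α).2 = (eat t α).2 := by
  induction t generalizing g α with
  | Ret b => rfl
  | Rd φ ih => exact ih _ _ _

lemma snd_fst_eat_rho_apply (t : T A B) (g : Stream' A → C) (α : Stream' A) :
    (eat (rho t g) α).1.2 (eat t α).2 = g α := by
  induction t generalizing g α with
  | Ret b => rfl
  | Rd φ ih => exact (ih α.head _ α.tail).trans (congrArg g (Stream'.eta α))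

end FastForward

section Continuity

variable {A B C : Type u}

lemma ContS.comp_cons {g : Stream' A → Stream' C} (hg : ContS g) (a : A) :
    ContS fun α => g (a :: α) := by
  intro α n
  obtain ⟨m, hm⟩ := hg (a :: α) n
  refine ⟨m, fun β hβ => hm (a :: β) fun j hj => ?_⟩
  cases j with
  | zero => rfl
  | succ j => exact hβ j (by omega)

lemma ContS.contD_head {f : Stream' A → Stream' B} (hf : ContS f) :
    ContD fun α => (f α).head := by
  intro α
  obtain ⟨m, hm⟩ := hf α 1
  exact ⟨m, fun β hβ => (hm β hβ 0 one_pos).symm⟩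

lemma ContS.tail {f : Stream' A → Stream' B} (hf : ContS f) :
    ContS fun α => (f α).tail := by
  intro α n
  obtain ⟨m, hm⟩ := hf α (n + 1)
  exact ⟨m, fun β hβ i hi => hm β hβ (i + 1) (by omega)⟩

lemma ContS.snd_fst_eat_rho (t : T A B) {g : Stream' A → Stream' C} (hg : ContS g)
    (α : Stream' A) : ContS (eat (rho t g) α).1.2 := by
  induction t generalizing g α with
  | Ret b => exact hg
  | Rd φ ih => exact ih _ (hg.comp_cons _) _

end Continuity

lemma eatInf_repInf_eq_cons {A B : Type u} (rep : (Stream' A → B) → T A B)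
    (hrep : ∀ g : Stream' A → B, ContD g → ∀ α, (eat (rep g) α).1 = g α)
    {f : Stream' A → Stream' B} (hf : ContS f) (α : Stream' A) :
    ∃ f' α', ContS f' ∧ f' α' = (f α).tail ∧
      eatInf (repInf rep f) α = (f α).head :: eatInf (repInf rep f') α' := by
  set t := rep fun β => (f β).head
  refine ⟨(eat (rho t fun β => (f β).tail) α).1.2, (eat t α).2,
    hf.tail.snd_fst_eat_rho t α, snd_fst_eat_rho_apply t _ α, ?_⟩
  rw [eatInf_eq_cons, repInf, Pout_Punfold, eat_tmap, ← hrep _ hf.contD_head α,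
    ← fst_fst_eat_rho t (fun β => (f β).tail), ← snd_eat_rho t (fun β => (f β).tail)]
  rfl

/-- Completeness of the stream-to-stream representation: if `rep` represents every
continuous discrete-valued function, then `rep∞ = unfold (ρ ∘ τ)` is a right
inverse of `eat∞`. -/
theorem stmt12 {A B : Type u} (rep : (Stream' A → B) → T A B)
    (hrep : ∀ g : Stream' A → B, ContD g → ∀ α, (eat (rep g) α).1 = g α)
    (f : Stream' A → Stream' B) (hf : ContS f) (α : Stream' A) :
    eatInf (repInf rep f) α = f α := by
  refine eq_of_bisim
    (fun s s' => ∃ f α, ContS f ∧ s = eatInf (repInf rep f) α ∧ s' = f α)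
    ?_ ⟨f, α, hf, rfl, rfl⟩
  rintro _ _ ⟨f, α, hf, rfl, rfl⟩
  obtain ⟨f', α', hf', hf'α', hcons⟩ := eatInf_repInf_eq_cons rep hrep hf α
  rw [hcons, head_cons, tail_cons]
  exact ⟨rfl, f', α', hf', rfl, hf'α'.symm⟩

end StreamProc
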